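/- arXiv:2408.05152 — 2 statements merged into one kernel-verified Lean document; each statement's English description precedes it below -/
import Mathlib

section
/- Let k_A ≥ 2, k_B, ω_A, ω_B be positive integers with 1 ≤ ω_A ≤ k_A − 1 and ω_B ≤ k_B. Suppose nonneg integers δ̃_0 ≥ ... ≥ δ̃_{k_A−1} with k_B − ω_B < δ̃_0 ≤ k_B and δ̃_{k_A−ω_A} ≤ k_B − ω_B. Then ω_A·k_B + ∑_{i=1}^{k_A−ω_A−1} δ̃_i + (δ̃_{k_A−ω_A} + ω_B − 1) ≥ ∑_{i=0}^{k_A−1} δ̃_i + ω_Aω_B − 1. -/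
/-- Case 2(b) of the matrix-matrix counting lemma. -/
theorem stmt_16 (kA kB ωA ωB : ℕ) (hkA : 2 ≤ kA) (hkB : 0 < kB)
    (hωA : 1 ≤ ωA) (hωA' : ωA ≤ kA - 1) (hωB : 0 < ωB) (hωBk : ωB ≤ kB)
    (δ : ℕ → ℕ)
    (hanti : ∀ i j, i ≤ j → j < kA → δ j ≤ δ i)
    (hδ0 : kB - ωB < δ 0) (hδ0' : δ 0 ≤ kB)
    (hsmall : δ (kA - ωA) ≤ kB - ωB) :
    ∑ i ∈ Finset.range kA, δ i + ωA * ωB - 1 ≤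
      ωA * kB + ∑ i ∈ Finset.Ico 1 (kA - ωA), δ i + (δ (kA - ωA) + ωB - 1) := by
  set m := kA - ωA with hm
  have hm1 : 1 ≤ m := by omega
  have hmkA : m < kA := by omega
  -- split the full sum
  have hsplit : ∑ i ∈ Finset.range kA, δ i
      = δ 0 + ∑ i ∈ Finset.Ico 1 m, δ i + (δ m + ∑ i ∈ Finset.Ico (m + 1) kA, δ i) := by
    rw [Finset.range_eq_Ico,
      ← Finset.sum_Ico_consecutive _ (Nat.zero_le m) hmkA.le,
      ← Finset.sum_Ico_consecutive _ (Nat.zero_le 1) hm1,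
      ← Finset.sum_Ico_consecutive _ (Nat.le_succ m) (by omega : m + 1 ≤ kA)]
    simp
  -- bound the tail sum
  have htail : ∑ i ∈ Finset.Ico (m + 1) kA, δ i ≤ (ωA - 1) * (kB - ωB) := by
    have h1 : ∑ i ∈ Finset.Ico (m + 1) kA, δ i
        ≤ (Finset.Ico (m + 1) kA).card * (kB - ωB) := by
      apply Finset.sum_le_card_nsmul
      intro i hi
      simp only [Finset.mem_Ico] at hi
      exact le_trans (hanti m i (by omega) hi.2) hsmall
    have h2 : (Finset.Ico (m + 1) kA).card = ωA - 1 := by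
      rw [Nat.card_Ico]; omega
    rw [h2] at h1
    simpa using h1
  -- key product identity
  have key : kB + (ωA - 1) * (kB - ωB) + ωA * ωB = ωA * kB + ωB := by
    obtain ⟨a, rfl⟩ : ∃ a, ωA = a + 1 := ⟨ωA - 1, by omega⟩
    obtain ⟨b, rfl⟩ : ∃ b, kB = ωB + b := ⟨kB - ωB, by omega⟩
    simp only [Nat.add_sub_cancel, Nat.add_sub_cancel_left]
    ring
  have hω1 : 1 ≤ ωA * ωB := Nat.one_le_iff_ne_zero.mpr (by positivity)
  rw [hsplit]
  set S := ∑ i ∈ Finset.Ico 1 m, δ i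
  set T := ∑ i ∈ Finset.Ico (m + 1) kA, δ i
  set P := ωA * ωB
  set Q := ωA * kB
  set R := (ωA - 1) * (kB - ωB)
  omega
end

section
/- Let n = k + s with s ≤ k, and suppose an n×k assignment family (T_i)_{i<n} of subsets of {0,...,k−1} satisfies: for every m ≤ k and every m-subset I ⊆ {0,...,n−1}, |⋃_{i∈I} T_i| ≥ m. Then for any k-subset K of the workers, a k×k matrix whose i-th row is supported on T_{σ(i)} (σ enumerating K) with generic (algebraically independent) nonzero coefficients on the support is invertible. -/
/-- Decodability: if the assignment family `(T i)` of subsets of the `k`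
unknowns satisfies the Hall-type condition (any `m ≤ k` workers jointly touch at
least `m` unknowns), then for any `k`-subset of workers, enumerated by an
injection `σ`, the `k × k` matrix whose `i`-th row has independent indeterminate
entries exactly on the support `T (σ i)` has nonzero determinant; hence generic
coefficient choices give an invertible decoding matrix. -/
theorem stmt_17 (n k s : ℕ) (hk : 0 < k) (hs : 0 < s) (hsk : s ≤ k)
    (hn : n = k + s) (T : Fin n → Finset (Fin k))
    (hall : ∀ I : Finset (Fin n), I.card ≤ k → I.card ≤ (I.biUnion T).card)
    (K : Finset (Fin n)) (hK : K.card = k)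
    (σ : Fin k → Fin n) (hσ : Function.Injective σ)
    (hσK : ∀ i, σ i ∈ K) :
    (Matrix.of (fun i j : Fin k =>
      if j ∈ T (σ i) then MvPolynomial.X (i, j) else
        (0 : MvPolynomial (Fin k × Fin k) ℚ))).det ≠ 0 := by
  -- Hall condition for the composed family
  have hall' : ∀ I : Finset (Fin k), I.card ≤ ((I.biUnion fun i => T (σ i)).card) := by
    intro I
    have hcard : (I.image σ).card = I.card := Finset.card_image_of_injective I hσ
    have hle : (I.image σ).card ≤ k := by
      rw [hcard]
      exact le_trans (Finset.card_le_univ I) (by simp)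
    have h := hall (I.image σ) hle
    rw [hcard] at h
    have : (I.image σ).biUnion T = I.biUnion fun i => T (σ i) := by
      ext x; simp
    rwa [this] at h
  obtain ⟨f, hf_inj, hf_mem⟩ :=
    (Finset.all_card_le_biUnion_card_iff_existsInjective' (fun i => T (σ i))).mp hall'
  -- evaluate at X (i,j) ↦ 1 if j = f i else 0
  set ev : MvPolynomial (Fin k × Fin k) ℚ →+* ℚ :=
    (MvPolynomial.eval fun p : Fin k × Fin k => if p.2 = f p.1 then (1 : ℚ) else 0)
  intro hdet
  let e : Fin k ≃ Fin k := Equiv.ofBijective f ((Finite.injective_iff_bijective).mp hf_inj)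
  have he : ∀ i, e i = f i := fun _ => rfl
  have hmap : ev (Matrix.of (fun i j : Fin k =>
      if j ∈ T (σ i) then MvPolynomial.X (i, j) else
        (0 : MvPolynomial (Fin k × Fin k) ℚ))).det
      = (Equiv.Perm.permMatrix ℚ e).det := by
    rw [RingHom.map_det]
    congr 1
    ext i j
    simp only [RingHom.mapMatrix_apply, Matrix.map_apply, Matrix.of_apply,
      Equiv.Perm.permMatrix, PEquiv.toMatrix, Equiv.toPEquiv, PEquiv.coe_mk,
      Function.comp_apply, Option.mem_def, Option.some.injEq, he, ev]
    by_cases h : j ∈ T (σ i)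
    · by_cases hj : j = f i
      · subst hj; simp [h]
      · have hne : ¬ f i = j := fun h' => hj h'.symm
        simp [h, hj, hne]
    · have hj : ¬ j = f i := fun h' => h (h' ▸ hf_mem i)
      have hne : ¬ f i = j := fun h' => hj h'.symm
      simp [h, hne]
  rw [hdet, map_zero] at hmap
  have := Matrix.det_permutation (R := ℚ) e
  rw [← hmap] at this
  have hsign : ((Equiv.Perm.sign e : ℤ) : ℚ) ≠ 0 := by
    rcases Int.units_eq_one_or (Equiv.Perm.sign e) with h | h <;> simp [h]
  exact hsign this.symm
end
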